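/- (Nested Pythagorean decomposition.) Let V ⊆ ℝ be an open interval, G : V → ℝ strictly convex and differentiable with derivative g = G′, and f the inverse of g. Fix N ∈ ℕ and for i = 1,…,N let δ_i ∈ {0,1}, q_i > 0, initial weights ω_i^{(0)} ∈ V, and calibration vectors z_i = (u_iᵀ, v_iᵀ)ᵀ ∈ ℝ^d with u_i ∈ ℝ^{d₁}. Let C = {ω : Σ_{i=1}^N δ_i ω_i z_i = Σ_{i=1}^N z_i} and C₁ = {ω : Σ_{i=1}^N δ_i ω_i u_i = Σ_{i=1}^N u_i}, so that C ⊆ C₁. Suppose ω̂ ∈ C has the dual form ω̂_i = f(g(ω_i^{(0)}) + q_i λ̂ᵀ z_i) for some λ̂ ∈ ℝ^d, and ω₁* ∈ C₁ has the dual form ω₁*_i = f(g(ω_i^{(0)}) + q_i μ̂ᵀ u_i) for some μ̂ ∈ ℝ^{d₁}. Then D̃_G(ω̂‖ω^{(0)}) = D̃_G(ω₁*‖ω^{(0)}) + D̃_G(ω̂‖ω₁*). -/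

import Mathlib

/-!
Since `g ∘ f = id` on `g '' V`, the dual form of `ω₁*` says that `δᵢ qᵢ⁻¹ (g(ω₁*ᵢ) - g(ω⁰ᵢ)) = δᵢ μ̂ᵀuᵢ`.
The three-point identity of Bregman divergences therefore splits `D̃_G(ω̂‖ω⁰)` into
`D̃_G(ω₁*‖ω⁰) + D̃_G(ω̂‖ω₁*)` plus the cross term `μ̂ᵀ Σᵢ δᵢ (ω̂ᵢ - ω₁*ᵢ) uᵢ`, which vanishes because
both `ω̂` and `ω₁*` satisfy the `u`-part of the calibration constraint.
-/

open Matrix Finset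

def bregmanDiv (G g : ℝ → ℝ) (a b : ℝ) : ℝ := G a - G b - g b * (a - b)

theorem bregmanDiv_three_point (G g : ℝ → ℝ) (a b c : ℝ) :
    bregmanDiv G g a c = bregmanDiv G g b c + bregmanDiv G g a b + (g b - g c) * (a - b) := by
  unfold bregmanDiv
  ring

theorem sum_mul_bregmanDiv_three_point {ι : Type*} [Fintype ι] (G g : ℝ → ℝ) (w a b c : ι → ℝ) :
    ∑ i, w i * bregmanDiv G g (a i) (c i) =
      ∑ i, w i * bregmanDiv G g (b i) (c i) + ∑ i, w i * bregmanDiv G g (a i) (b i) +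
        ∑ i, w i * ((g (b i) - g (c i)) * (a i - b i)) := by
  simp only [fun i => bregmanDiv_three_point G g (a i) (b i) (c i), mul_add, sum_add_distrib]

theorem sum_smul_eq_sum_of_sum_smul_sumElim_eq {ι α β : Type*} [Fintype ι] {c : ι → ℝ}
    {u : ι → α → ℝ} {v : ι → β → ℝ}
    (h : ∑ i, c i • Sum.elim (u i) (v i) = ∑ i, Sum.elim (u i) (v i)) :
    ∑ i, c i • u i = ∑ i, u i := by
  funext j
  simpa only [Finset.sum_apply, Pi.smul_apply, Sum.elim_inl] using congrFun h (Sum.inl j)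

theorem sum_dotProduct_mul_sub_eq_zero {ι κ : Type*} [Fintype ι] [Fintype κ] {a b : ι → ℝ}
    {u : ι → κ → ℝ} (μ : κ → ℝ) (ha : ∑ i, a i • u i = ∑ i, u i)
    (hb : ∑ i, b i • u i = ∑ i, u i) :
    ∑ i, (μ ⬝ᵥ u i) * (a i - b i) = 0 := by
  calc ∑ i, (μ ⬝ᵥ u i) * (a i - b i) = μ ⬝ᵥ (∑ i, a i • u i - ∑ i, b i • u i) := by
        simp only [← sum_sub_distrib, ← sub_smul, dotProduct_sum, dotProduct_smul, smul_eq_mul,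
          mul_comm]
    _ = 0 := by rw [ha, hb, sub_self, dotProduct_zero]

theorem stmt_10_general (N d₁ d₂ : ℕ) (V : Set ℝ)
    (G g f : ℝ → ℝ)
    (hfinv : ∀ ω ∈ V, f (g ω) = ω)
    (δ q ω0 : Fin N → ℝ) (hδ : ∀ i, δ i = 0 ∨ δ i = 1) (hq : ∀ i, 0 < q i)
    (u : Fin N → Fin d₁ → ℝ) (v : Fin N → Fin d₂ → ℝ)
    (z : Fin N → (Fin d₁ ⊕ Fin d₂) → ℝ) (hz : ∀ i, z i = Sum.elim (u i) (v i))
    (D : ℝ → ℝ → ℝ) (hD : ∀ a b, D a b = G a - G b - g b * (a - b))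
    (Dt : (Fin N → ℝ) → (Fin N → ℝ) → ℝ)
    (hDt : ∀ ω ω' : Fin N → ℝ, Dt ω ω' = ∑ i, δ i * (q i)⁻¹ * D (ω i) (ω' i))
    (mu : Fin d₁ → ℝ)
    (ωhat : Fin N → ℝ)
    (hcal : ∑ i, (δ i * ωhat i) • z i = ∑ i, z i)
    (hrange1 : ∀ i, δ i = 1 → ∃ ω ∈ V, g ω = g (ω0 i) + q i * (mu ⬝ᵥ u i))
    (ω1 : Fin N → ℝ)
    (hdual1 : ∀ i, δ i = 1 → ω1 i = f (g (ω0 i) + q i * (mu ⬝ᵥ u i)))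
    (hcal1 : ∑ i, (δ i * ω1 i) • u i = ∑ i, u i) :
    Dt ωhat ω0 = Dt ω1 ω0 + Dt ωhat ω1 := by
  obtain rfl : D = bregmanDiv G g := funext₂ hD
  have hg1 : ∀ i, δ i = 1 → g (ω1 i) = g (ω0 i) + q i * (mu ⬝ᵥ u i) := by
    intro i hi
    obtain ⟨ω, hωV, hgω⟩ := hrange1 i hi
    rw [hdual1 i hi, ← hgω, hfinv ω hωV]
  have hcross : ∀ i, δ i * (q i)⁻¹ * ((g (ω1 i) - g (ω0 i)) * (ωhat i - ω1 i)) =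
      (mu ⬝ᵥ u i) * (δ i * ωhat i - δ i * ω1 i) := by
    intro i
    rcases hδ i with h | h
    · simp [h]
    · rw [hg1 i h, h]
      field_simp [(hq i).ne']
      ring
  simp only [hz] at hcal
  rw [hDt, hDt, hDt, sum_mul_bregmanDiv_three_point G g _ _ ω1, sum_congr rfl fun i _ => hcross i,
    sum_dotProduct_mul_sub_eq_zero mu (sum_smul_eq_sum_of_sum_smul_sumElim_eq hcal) hcal1,
    add_zero]

/-- Nested Pythagorean decomposition: with `z_i = (u_iᵀ, v_iᵀ)ᵀ`,
`C ⊆ C₁` the full and reduced calibration constraint sets, and `ω̂ ∈ C`,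
`ω₁* ∈ C₁` the dual-form Bregman projections, one has
`D̃(ω̂‖ω⁰) = D̃(ω₁*‖ω⁰) + D̃(ω̂‖ω₁*)`. -/
theorem stmt_10 (N d₁ d₂ : ℕ) (V : Set ℝ) (hVopen : IsOpen V) (hVconn : V.OrdConnected)
    (G g f : ℝ → ℝ) (hconv : StrictConvexOn ℝ V G)
    (hderiv : ∀ ω ∈ V, HasDerivAt G (g ω) ω)
    (hfinv : ∀ ω ∈ V, f (g ω) = ω)
    (δ q ω0 : Fin N → ℝ) (hδ : ∀ i, δ i = 0 ∨ δ i = 1) (hq : ∀ i, 0 < q i)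
    (hω0 : ∀ i, ω0 i ∈ V)
    (u : Fin N → Fin d₁ → ℝ) (v : Fin N → Fin d₂ → ℝ)
    (z : Fin N → (Fin d₁ ⊕ Fin d₂) → ℝ) (hz : ∀ i, z i = Sum.elim (u i) (v i))
    (D : ℝ → ℝ → ℝ) (hD : ∀ a b, D a b = G a - G b - g b * (a - b))
    (Dt : (Fin N → ℝ) → (Fin N → ℝ) → ℝ)
    (hDt : ∀ ω ω' : Fin N → ℝ, Dt ω ω' = ∑ i, δ i * (q i)⁻¹ * D (ω i) (ω' i))
    (lam : (Fin d₁ ⊕ Fin d₂) → ℝ) (mu : Fin d₁ → ℝ)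
    (hrange : ∀ i, δ i = 1 → ∃ ω ∈ V, g ω = g (ω0 i) + q i * (lam ⬝ᵥ z i))
    (ωhat : Fin N → ℝ)
    (hdual : ∀ i, δ i = 1 → ωhat i = f (g (ω0 i) + q i * (lam ⬝ᵥ z i)))
    (hcal : ∑ i, (δ i * ωhat i) • z i = ∑ i, z i)
    (hrange1 : ∀ i, δ i = 1 → ∃ ω ∈ V, g ω = g (ω0 i) + q i * (mu ⬝ᵥ u i))
    (ω1 : Fin N → ℝ)
    (hdual1 : ∀ i, δ i = 1 → ω1 i = f (g (ω0 i) + q i * (mu ⬝ᵥ u i)))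
    (hcal1 : ∑ i, (δ i * ω1 i) • u i = ∑ i, u i) :
    Dt ωhat ω0 = Dt ω1 ω0 + Dt ωhat ω1 :=
  stmt_10_general N d₁ d₂ V G g f hfinv δ q ω0 hδ hq u v z hz D hD Dt hDt mu ωhat hcal hrange1 ω1
    hdual1 hcal1
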